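/- Under the SGD setup with f satisfying the Polyak–Łojasiewicz inequality with constant μ > 0, if η_k ≤ 1/L then the expected one-step decrease satisfies E[f(x_{k+1})] − E[f(x_k)] ≤ −μ η_k · E[f(x_k) − f(x⋆)] + L d σ⋆² η_k² / (2 b_k). -/

import Mathlib

open MeasureTheory Filter
open scoped RealInnerProductSpace NNReal ENNReal

/-!
Apply the descent lemma `f y ≤ f x + ⟪∇f x, y - x⟫ + L/2 ‖y - x‖²` along the step and take
expectations. Since `E[G_k | F_k] = ∇f(x_k)` and `∇f(x_k)` is `F_k`-measurable, pulling it out of the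
conditional expectation gives `E⟪∇f(x_k), G_k⟫ = E‖∇f(x_k)‖²` and the bias–variance split
`E‖G_k‖² = E‖G_k - ∇f(x_k)‖² + E‖∇f(x_k)‖²`. For `η_k L ≤ 1` the gradient terms add up to at most
`-η_k/2 · E‖∇f(x_k)‖²`, which the PL inequality bounds by `-μ η_k E[f(x_k) - f(x⋆)]`, and the
variance term is at most `L d σ⋆² η_k² / (2 b_k)`. All expectations are finite because the iterates
stay in `L²`, so that `f(x_k)` is squeezed between `f(x⋆)` and a quadratic in `x_k`.
-/

theorem LipschitzWith.memLp_comp {Ω E F : Type*} {m0 : MeasurableSpace Ω} {μ : Measure Ω}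
    [IsFiniteMeasure μ] [NormedAddCommGroup E] [NormedAddCommGroup F] {K : ℝ≥0} {p : ℝ≥0∞}
    {φ : E → F} {X : Ω → E} (hφ : LipschitzWith K φ) (hX : MemLp X p μ) :
    MemLp (fun ω ↦ φ (X ω)) p μ := by
  have := ((hφ.sub (LipschitzWith.const (φ 0))).comp_memLp (by simp) hX).add (memLp_const (φ 0))
  simpa [Function.comp_def, Pi.add_def] using this

section SGDStep

variable {E Ω : Type*} [NormedAddCommGroup E] [InnerProductSpace ℝ E]
  {m m0 : MeasurableSpace Ω} {μ : Measure Ω} {g G X : Ω → E}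

theorem integrable_inner_of_memLp_two (hg : MemLp g 2 μ) (hG : MemLp G 2 μ) :
    Integrable (fun ω ↦ ⟪g ω, G ω⟫) μ :=
  memLp_one_iff_integrable.1 ((innerSL ℝ).memLp_of_bilin 1 hg hG)

theorem integral_le_of_ae_condExp_le [IsProbabilityMeasure μ] (hm : m ≤ m0) {φ : Ω → ℝ} {c : ℝ}
    (hφ : ∀ᵐ ω ∂μ, μ[φ | m] ω ≤ c) : ∫ ω, φ ω ∂μ ≤ c := by
  rw [← integral_condExp hm]
  simpa using integral_mono_ae integrable_condExp (integrable_const c) hφ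

variable [CompleteSpace E] {f : E → ℝ} {K : ℝ≥0}

theorem le_add_inner_gradient_add_of_lipschitzWith_gradient (hf : Differentiable ℝ f)
    (hK : LipschitzWith K (gradient f)) (x y : E) :
    f y ≤ f x + ⟪gradient f x, y - x⟫ + K / 2 * ‖y - x‖ ^ 2 := by
  set v := y - x
  let φ : ℝ → ℝ := fun t ↦ f (x + t • v) - t * ⟪gradient f x, v⟫ - K / 2 * t ^ 2 * ‖v‖ ^ 2
  let φ' : ℝ → ℝ := fun t ↦ ⟪gradient f (x + t • v) - gradient f x, v⟫ - K * t * ‖v‖ ^ 2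
  have hφ : ∀ t, HasDerivAt φ (φ' t) t := by
    intro t
    have hline : HasDerivAt (fun t : ℝ ↦ x + t • v) v t := by
      simpa using ((hasDerivAt_id t).smul_const v).const_add x
    have hfline := (hf (x + t • v)).hasGradientAt.hasFDerivAt.comp_hasDerivAt t hline
    rw [InnerProductSpace.toDual_apply_apply] at hfline
    refine ((hfline.sub ((hasDerivAt_id t).mul_const ⟪gradient f x, v⟫)).sub
      ((((hasDerivAt_id t).pow 2).const_mul (K / 2 : ℝ)).mul_const (‖v‖ ^ 2))).congr_deriv ?_
    simp only [φ', inner_sub_left, id]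
    ring
  have hφ'_nonpos : ∀ t ∈ interior (Set.Ici (0 : ℝ)), φ' t ≤ 0 := by
    intro t ht
    rw [interior_Ici, Set.mem_Ioi] at ht
    have hlip : ‖gradient f (x + t • v) - gradient f x‖ ≤ K * (t * ‖v‖) := by
      simpa [norm_smul, abs_of_pos ht] using hK.norm_sub_le (x + t • v) x
    have := real_inner_le_norm (gradient f (x + t • v) - gradient f x) v
    simp only [φ']
    nlinarith [mul_le_mul_of_nonneg_right hlip (norm_nonneg v)]
  have hanti := antitoneOn_of_hasDerivWithinAt_nonpos (convex_Ici 0)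
    (fun t _ ↦ (hφ t).continuousAt.continuousWithinAt)
    (fun t _ ↦ (hφ t).hasDerivWithinAt) hφ'_nonpos
    Set.self_mem_Ici (Set.mem_Ici.2 zero_le_one) zero_le_one
  have hx1 : x + (1 : ℝ) • v = y := by simp [v]
  simp only [φ, hx1, zero_smul, add_zero, one_mul, zero_mul, sub_zero, one_pow, mul_one,
    ne_eq, OfNat.ofNat_ne_zero, not_false_eq_true, zero_pow, mul_zero] at hanti
  linarith

theorem integral_comp_sub_smul_le {η : ℝ} (hf : Differentiable ℝ f) (hK : LipschitzWith K (gradient f))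
    (hfX : Integrable (fun ω ↦ f (X ω)) μ) (hfX' : Integrable (fun ω ↦ f (X ω - η • G ω)) μ)
    (hgX : MemLp (fun ω ↦ gradient f (X ω)) 2 μ) (hG : MemLp G 2 μ) :
    ∫ ω, f (X ω - η • G ω) ∂μ ≤ ∫ ω, f (X ω) ∂μ - η * ∫ ω, ⟪gradient f (X ω), G ω⟫ ∂μ
      + K / 2 * η ^ 2 * ∫ ω, ‖G ω‖ ^ 2 ∂μ := by
  have hinner := (integrable_inner_of_memLp_two hgX hG).const_mul η
  have hsq := hG.norm.integrable_sq.const_mul (K / 2 * η ^ 2)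
  have hlin : Integrable (fun ω ↦ f (X ω) - η * ⟪gradient f (X ω), G ω⟫) μ := hfX.sub hinner
  have hpointwise : ∀ ω, f (X ω - η • G ω) ≤ f (X ω) - η * ⟪gradient f (X ω), G ω⟫
      + K / 2 * η ^ 2 * ‖G ω‖ ^ 2 := by
    intro ω
    have := le_add_inner_gradient_add_of_lipschitzWith_gradient hf hK (X ω) (X ω - η • G ω)
    rwa [sub_sub_cancel_left, inner_neg_right, real_inner_smul_right, norm_neg, norm_smul,
      mul_pow, Real.norm_eq_abs, sq_abs, ← sub_eq_add_neg, ← mul_assoc] at this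
  have hrhs : Integrable (fun ω ↦ f (X ω) - η * ⟪gradient f (X ω), G ω⟫
      + K / 2 * η ^ 2 * ‖G ω‖ ^ 2) μ := hlin.add hsq
  refine (integral_mono hfX' hrhs hpointwise).trans_eq ?_
  rw [integral_add hlin hsq, integral_sub hfX hinner, integral_const_mul, integral_const_mul]

variable [IsFiniteMeasure μ]

theorem integral_inner_eq_integral_norm_sq_of_condExp_eq (hm : m ≤ m0)
    (hg_meas : StronglyMeasurable[m] g) (hg : MemLp g 2 μ) (hG : MemLp G 2 μ)
    (hcond : μ[G | m] =ᵐ[μ] g) :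
    ∫ ω, ⟪g ω, G ω⟫ ∂μ = ∫ ω, ‖g ω‖ ^ 2 ∂μ := by
  have hpull := condExp_bilin_of_stronglyMeasurable_left (innerSL ℝ) hg_meas
    (integrable_inner_of_memLp_two hg hG) (hG.integrable one_le_two)
  calc ∫ ω, ⟪g ω, G ω⟫ ∂μ = ∫ ω, (μ[fun ω ↦ ⟪g ω, G ω⟫ | m]) ω ∂μ := (integral_condExp hm).symm
    _ = ∫ ω, ‖g ω‖ ^ 2 ∂μ := by
      refine integral_congr_ae (hpull.trans ?_)
      filter_upwards [hcond] with ω hω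
      rw [hω, innerSL_apply_apply, real_inner_self_eq_norm_sq]

theorem integral_norm_sq_eq_add_of_condExp_eq (hm : m ≤ m0)
    (hg_meas : StronglyMeasurable[m] g) (hg : MemLp g 2 μ) (hG : MemLp G 2 μ)
    (hcond : μ[G | m] =ᵐ[μ] g) :
    ∫ ω, ‖G ω‖ ^ 2 ∂μ = ∫ ω, ‖G ω - g ω‖ ^ 2 ∂μ + ∫ ω, ‖g ω‖ ^ 2 ∂μ := by
  have hcross := integral_inner_eq_integral_norm_sq_of_condExp_eq hm hg_meas hg hG hcond
  have hexpand : ∫ ω, ‖G ω - g ω‖ ^ 2 ∂μ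
      = ∫ ω, ‖G ω‖ ^ 2 ∂μ - 2 * ∫ ω, ⟪g ω, G ω⟫ ∂μ + ∫ ω, ‖g ω‖ ^ 2 ∂μ := by
    have hinner := (integrable_inner_of_memLp_two hg hG).const_mul 2
    have hdiff : Integrable (fun ω ↦ ‖G ω‖ ^ 2 - 2 * ⟪g ω, G ω⟫) μ :=
      hG.norm.integrable_sq.sub hinner
    simp_rw [norm_sub_sq_real, real_inner_comm (g _)]
    rw [integral_add hdiff hg.norm.integrable_sq, integral_sub hG.norm.integrable_sq hinner,
      integral_const_mul]
  linarith

theorem integrable_comp_of_lipschitzWith_gradient (hf : Differentiable ℝ f)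
    (hK : LipschitzWith K (gradient f)) {xstar : E} (hmin : ∀ z, f xstar ≤ f z)
    (hX : MemLp X 2 μ) : Integrable (fun ω ↦ f (X ω)) μ := by
  refine integrable_of_le_of_le (g₁ := fun _ ↦ f xstar)
    (g₂ := fun ω ↦ f 0 + ⟪gradient f 0, X ω⟫ + K / 2 * ‖X ω‖ ^ 2)
    (hf.continuous.comp_aestronglyMeasurable hX.1) (ae_of_all _ fun ω ↦ hmin (X ω))
    (ae_of_all _ fun ω ↦ by
      simpa using le_add_inner_gradient_add_of_lipschitzWith_gradient hf hK 0 (X ω))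
    (integrable_const _) ?_
  exact ((integrable_const _).add ((hX.const_inner _).integrable one_le_two)).add
    (hX.norm.integrable_sq.const_mul _)

theorem integral_sgd_step_le (hm : m ≤ m0) (hf : Differentiable ℝ f)
    (hK : LipschitzWith K (gradient f)) {xstar : E} (hmin : ∀ z, f xstar ≤ f z)
    (hX_meas : StronglyMeasurable[m] X) (hX : MemLp X 2 μ) (hG : MemLp G 2 μ)
    (hcond : μ[G | m] =ᵐ[μ] fun ω ↦ gradient f (X ω)) (η : ℝ) :
    ∫ ω, f (X ω - η • G ω) ∂μ ≤ ∫ ω, f (X ω) ∂μ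
      - η * (1 - K * η / 2) * ∫ ω, ‖gradient f (X ω)‖ ^ 2 ∂μ
      + K / 2 * η ^ 2 * ∫ ω, ‖G ω - gradient f (X ω)‖ ^ 2 ∂μ := by
  have hgX := hK.memLp_comp hX
  have hgX_meas : StronglyMeasurable[m] fun ω ↦ gradient f (X ω) :=
    hK.continuous.comp_stronglyMeasurable hX_meas
  have hdescent := integral_comp_sub_smul_le (η := η) hf hK
    (integrable_comp_of_lipschitzWith_gradient hf hK hmin hX)
    (integrable_comp_of_lipschitzWith_gradient hf hK hmin (hX.sub (hG.const_smul η))) hgX hG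
  rw [integral_inner_eq_integral_norm_sq_of_condExp_eq hm hgX_meas hgX hG hcond,
    integral_norm_sq_eq_add_of_condExp_eq hm hgX_meas hgX hG hcond] at hdescent
  linarith

theorem integral_sgd_step_le_of_pl (hm : m ≤ m0) (hf : Differentiable ℝ f)
    (hK : LipschitzWith K (gradient f)) {xstar : E} (hmin : ∀ z, f xstar ≤ f z) {μpl : ℝ}
    (hpl : ∀ z, 2 * μpl * (f z - f xstar) ≤ ‖gradient f z‖ ^ 2)
    (hX_meas : StronglyMeasurable[m] X) (hX : MemLp X 2 μ) (hG : MemLp G 2 μ)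
    (hcond : μ[G | m] =ᵐ[μ] fun ω ↦ gradient f (X ω)) {η : ℝ} (hη : 0 ≤ η) (hηK : η * K ≤ 1) :
    ∫ ω, f (X ω - η • G ω) ∂μ ≤ ∫ ω, f (X ω) ∂μ
      - μpl * η * ∫ ω, (f (X ω) - f xstar) ∂μ
      + K / 2 * η ^ 2 * ∫ ω, ‖G ω - gradient f (X ω)‖ ^ 2 ∂μ := by
  have hpl_int : 2 * μpl * ∫ ω, (f (X ω) - f xstar) ∂μ ≤ ∫ ω, ‖gradient f (X ω)‖ ^ 2 ∂μ := by
    rw [← integral_const_mul]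
    exact integral_mono
      (((integrable_comp_of_lipschitzWith_gradient hf hK hmin hX).sub
        (integrable_const _)).const_mul _)
      (hK.memLp_comp hX).norm.integrable_sq fun ω ↦ hpl (X ω)
  have hgrad_nonneg : 0 ≤ ∫ ω, ‖gradient f (X ω)‖ ^ 2 ∂μ := integral_nonneg fun _ ↦ sq_nonneg _
  have hgrad_term : μpl * η * ∫ ω, (f (X ω) - f xstar) ∂μ
      ≤ η * (1 - K * η / 2) * ∫ ω, ‖gradient f (X ω)‖ ^ 2 ∂μ :=
    calc _ = η / 2 * (2 * μpl * ∫ ω, (f (X ω) - f xstar) ∂μ) := by ring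
      _ ≤ η / 2 * ∫ ω, ‖gradient f (X ω)‖ ^ 2 ∂μ := by gcongr
      _ ≤ _ := by nlinarith [mul_nonneg (mul_nonneg hη hgrad_nonneg) (sub_nonneg.2 hηK)]
  linarith [integral_sgd_step_le hm hf hK hmin hX_meas hX hG hcond η]

end SGDStep

theorem sgd_one_step_decrease_pl_general
    {Ω : Type*} {m0 : MeasurableSpace Ω} {μ : Measure Ω} [IsProbabilityMeasure μ]
    {d : ℕ} (f : EuclideanSpace ℝ (Fin d) → ℝ) (L : ℝ)
    (hf : ContDiff ℝ 1 f)
    (hL : ∀ x y : EuclideanSpace ℝ (Fin d), ‖gradient f x - gradient f y‖ ≤ L * ‖x - y‖)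
    (xstar : EuclideanSpace ℝ (Fin d)) (hmin : ∀ x, f xstar ≤ f x)
    (μpl : ℝ)
    (hpl : ∀ z : EuclideanSpace ℝ (Fin d), 2 * μpl * (f z - f xstar) ≤ ‖gradient f z‖ ^ 2)
    (ℱ : Filtration ℕ m0)
    (x G : ℕ → Ω → EuclideanSpace ℝ (Fin d))
    (x0 : EuclideanSpace ℝ (Fin d)) (hx0 : x 0 = fun _ => x0)
    (hx_meas : ∀ k, Measurable[ℱ k] (x k))
    (σsq : ℝ)
    (b : ℕ → ℝ)
    (h : ℝ) (hh : 0 < h)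
    (ψ : ℕ → ℝ) (hψpos : ∀ k, 0 < ψ k)
    (η : ℕ → ℝ) (hη : ∀ k, η k = h * ψ k)
    (hupdate : ∀ k ω, x (k + 1) ω = x k ω - η k • G k ω)
    (hG2 : ∀ k, MemLp (G k) 2 μ)
    (hGmean : ∀ k, μ[G k | ℱ k] =ᵐ[μ] fun ω => gradient f (x k ω))
    (hGvar : ∀ k, ∀ᵐ ω ∂μ,
      (μ[fun ω' => ‖G k ω' - gradient f (x k ω')‖ ^ 2 | ℱ k]) ω ≤ d * σsq / b k)
    (k : ℕ) :
    η k ≤ 1 / L →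
      (∫ ω, f (x (k + 1) ω) ∂μ) - ∫ ω, f (x k ω) ∂μ ≤
        -(μpl * η k) * ∫ ω, (f (x k ω) - f xstar) ∂μ + L * d * σsq * η k ^ 2 / (2 * b k) := by
  intro hstep
  have hη_pos : 0 < η k := hη k ▸ mul_pos hh (hψpos k)
  have hL_pos : 0 < L := by
    by_contra! hL_nonpos
    linarith [div_nonpos_of_nonneg_of_nonpos zero_le_one hL_nonpos]
  have hηL : η k * L ≤ 1 := (le_div_iff₀ hL_pos).1 hstep
  have hK : LipschitzWith L.toNNReal (gradient f) :=
    LipschitzWith.of_dist_le' (by simpa only [dist_eq_norm] using hL)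
  have hdiff : Differentiable ℝ f := hf.differentiable one_ne_zero
  have hx2 : ∀ j, MemLp (x j) 2 μ := by
    intro j
    induction j with
    | zero => exact hx0 ▸ memLp_const x0
    | succ j ih => exact funext (hupdate j) ▸ ih.sub ((hG2 j).const_smul (η j))
  have hdescent := integral_sgd_step_le_of_pl (ℱ.le k) hdiff hK hmin hpl
    (hx_meas k).stronglyMeasurable (hx2 k) (hG2 k) (hGmean k) hη_pos.le
    (by rwa [Real.coe_toNNReal L hL_pos.le])
  simp only [Real.coe_toNNReal L hL_pos.le, ← hupdate] at hdescent
  have hnoise : L / 2 * η k ^ 2 * ∫ ω, ‖G k ω - gradient f (x k ω)‖ ^ 2 ∂μ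
      ≤ L * d * σsq * η k ^ 2 / (2 * b k) :=
    calc _ ≤ L / 2 * η k ^ 2 * (d * σsq / b k) := by
          gcongr; exact integral_le_of_ae_condExp_le (ℱ.le k) (hGvar k)
      _ = L * d * σsq * η k ^ 2 / (2 * b k) := by ring
  linarith

/-- **One-step decrease of the expected suboptimality for mini-batch SGD on
Polyak–Łojasiewicz functions.** If `f` satisfies the PŁ inequality with constant `μ > 0`
and `η_k ≤ 1/L`, then
`E[f(x_{k+1})] − E[f(x_k)] ≤ −μ η_k E[f(x_k) − f(x⋆)] + L d σ⋆² η_k²/(2 b_k)`. -/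
theorem sgd_one_step_decrease_pl
    {Ω : Type*} {m0 : MeasurableSpace Ω} {μ : Measure Ω} [IsProbabilityMeasure μ]
    {d : ℕ} (f : EuclideanSpace ℝ (Fin d) → ℝ) (L : ℝ)
    (hf : ContDiff ℝ 1 f)
    (hL : ∀ x y : EuclideanSpace ℝ (Fin d), ‖gradient f x - gradient f y‖ ≤ L * ‖x - y‖)
    (xstar : EuclideanSpace ℝ (Fin d)) (hmin : ∀ x, f xstar ≤ f x)
    (μpl : ℝ) (hμpl : 0 < μpl)
    (hpl : ∀ z : EuclideanSpace ℝ (Fin d), 2 * μpl * (f z - f xstar) ≤ ‖gradient f z‖ ^ 2)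
    (ℱ : Filtration ℕ m0)
    (x G : ℕ → Ω → EuclideanSpace ℝ (Fin d))
    (x0 : EuclideanSpace ℝ (Fin d)) (hx0 : x 0 = fun _ => x0)
    (hx_meas : ∀ k, Measurable[ℱ k] (x k))
    (σsq : ℝ) (hσsq : 0 ≤ σsq)
    (b : ℕ → ℝ) (hb : ∀ k, 1 ≤ b k)
    (h : ℝ) (hh : 0 < h)
    (ψ : ℕ → ℝ) (hψpos : ∀ k, 0 < ψ k) (hψle : ∀ k, ψ k ≤ 1)
    (hψ0 : ψ 0 = 1) (hψmono : ∀ k, ψ (k + 1) ≤ ψ k)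
    (η : ℕ → ℝ) (hη : ∀ k, η k = h * ψ k)
    (hupdate : ∀ k ω, x (k + 1) ω = x k ω - η k • G k ω)
    (hG2 : ∀ k, MemLp (G k) 2 μ)
    (hGmean : ∀ k, μ[G k | ℱ k] =ᵐ[μ] fun ω => gradient f (x k ω))
    (hGvar : ∀ k, ∀ᵐ ω ∂μ,
      (μ[fun ω' => ‖G k ω' - gradient f (x k ω')‖ ^ 2 | ℱ k]) ω ≤ d * σsq / b k)
    (k : ℕ) :
    η k ≤ 1 / L →
      (∫ ω, f (x (k + 1) ω) ∂μ) - ∫ ω, f (x k ω) ∂μ ≤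
        -(μpl * η k) * ∫ ω, (f (x k ω) - f xstar) ∂μ + L * d * σsq * η k ^ 2 / (2 * b k) :=
  sgd_one_step_decrease_pl_general f L hf hL xstar hmin μpl hpl ℱ x G x0 hx0 hx_meas σsq b h hh ψ
    hψpos η hη hupdate hG2 hGmean hGvar k
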